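/- Let G be a non-bipartite graph with chromatic number 3. Then the power thickness θ(G) equals 1 if and only if the circular chromatic number χ_c(G) equals 3. -/

import Mathlib

structure PGraph where
  V : Type
  Adj : V → V → Prop
  symm : ∀ u v, Adj u v → Adj v u

namespace PGraph

/-- There is a walk of length exactly `n` from `u` to `v`. -/
def walkLen (G : PGraph) : ℕ → G.V → G.V → Prop
  | 0, u, v => u = v
  | n+1, u, v => ∃ w, G.Adj u w ∧ G.walkLen n w v

theorem walkLen_concat (G : PGraph) : ∀ (n : ℕ) (u v w : G.V),
    G.walkLen n u v → G.Adj v w → G.walkLen (n+1) u w := by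
  intro n
  induction n with
  | zero =>
      intro u v w h hadj
      cases h
      exact ⟨w, hadj, rfl⟩
  | succ n ih =>
      rintro u v w ⟨x, hux, hxv⟩ hadj
      exact ⟨x, hux, ih x v w hxv hadj⟩

theorem walkLen_symm (G : PGraph) : ∀ (n : ℕ) (u v : G.V),
    G.walkLen n u v → G.walkLen n v u := by
  intro n
  induction n with
  | zero => intro u v h; exact h.symm
  | succ n ih =>
      rintro u v ⟨w, huw, hwv⟩
      exact G.walkLen_concat n v w u (ih w v hwv) (G.symm u w huw)

/-- The `k`-th power of a graph: same vertices, adjacency = existence of a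
walk of length exactly `k` (loops allowed). -/
def pow (G : PGraph) (k : ℕ) : PGraph where
  V := G.V
  Adj u v := G.walkLen k u v
  symm := G.walkLen_symm k

/-- Existence of a graph homomorphism. -/
def homTo (G H : PGraph) : Prop :=
  ∃ f : G.V → H.V, ∀ u v, G.Adj u v → H.Adj (f u) (f v)

/-- The `(2s+1)`-subdivision `S_{2s+1}(G)`: every edge is replaced by a path
of length `2s+1`.  Following the paper's notation, the ordered pair `(u,v)`
(with `u ~ v`) carries the `s` inner vertices `(uv)_1, …, (uv)_s`. -/
def subdiv (G : PGraph) (s : ℕ) : PGraph where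
  V := G.V ⊕ ({p : G.V × G.V // G.Adj p.1 p.2} × Fin s)
  Adj x y :=
    match x, y with
    | Sum.inl u, Sum.inl v => s = 0 ∧ G.Adj u v
    | Sum.inl u, Sum.inr (e, k) => u = e.1.2 ∧ (k : ℕ) = s - 1
    | Sum.inr (e, k), Sum.inl u => u = e.1.2 ∧ (k : ℕ) = s - 1
    | Sum.inr (e, k), Sum.inr (e', l) =>
        e'.1.1 = e.1.2 ∧ e'.1.2 = e.1.1 ∧
        ((k : ℕ) + (l : ℕ) + 2 = s ∨ (k : ℕ) + (l : ℕ) + 2 = s + 1)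
  symm := by
    rintro (u | ⟨e, k⟩) (v | ⟨e', l⟩) h
    · exact ⟨h.1, G.symm _ _ h.2⟩
    · exact h
    · exact h
    · obtain ⟨h1, h2, h3⟩ := h
      exact ⟨h2.symm, h1.symm, by omega⟩

/-- `q < og(G)`: the rational `q` is smaller than the odd girth of `G`
(the length of a shortest odd closed walk; vacuously true if `G` is bipartite). -/
def ltOddGirth (G : PGraph) (q : ℚ) : Prop :=
  ∀ n : ℕ, Odd n → (∃ v, G.walkLen n v v) → q < (n : ℚ)

/-- A graph is non-bipartite iff it contains an odd closed walk. -/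
def Nonbipartite (G : PGraph) : Prop :=
  ∃ (n : ℕ) (v : G.V), Odd n ∧ G.walkLen n v v

/-- The odd girth, as an extended natural number (`⊤` for bipartite graphs). -/
noncomputable def oddGirth (G : PGraph) : ℕ∞ :=
  sInf {N : ℕ∞ | ∃ n : ℕ, N = (n : ℕ∞) ∧ Odd n ∧ ∃ v, G.walkLen n v v}

/-- The complete graph on `m` vertices. -/
def completeGraph (m : ℕ) : PGraph :=
  ⟨Fin m, fun u v => u ≠ v, fun _ _ h => h.symm⟩

/-- The chromatic number: least `m` such that `G` maps homomorphically to `K_m`. -/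
noncomputable def chromatic (G : PGraph) : ℕ :=
  sInf {m : ℕ | G.homTo (completeGraph m)}

/-- The `i`-th power thickness
`θ_i(G) = sup { (2r+1)/(2s+1) | χ(G^{(2r+1)/(2s+1)}) ≤ χ(G)+i, (2r+1)/(2s+1) < og(G) }`. -/
noncomputable def powerThickness (G : PGraph) (i : ℤ) : ℝ :=
  sSup {x : ℝ | ∃ r s : ℕ, x = (2*(r:ℝ)+1)/(2*(s:ℝ)+1) ∧
    ((((G.subdiv s).pow (2*r+1)).chromatic : ℤ) ≤ (G.chromatic : ℤ) + i) ∧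
    G.ltOddGirth ((2*(r:ℚ)+1)/(2*(s:ℚ)+1))}

/-- The graph `H^{-1/(2r+1)}`. -/
def negPow (H : PGraph) (r : ℕ) : PGraph where
  V := {A : Fin (r+1) → Set H.V //
        (∃ v, A 0 = {v}) ∧
        ∀ i : Fin (r+1), (A i).Nonempty ∧ A i ⊆ {u | ∃ v ∈ A 0, H.walkLen i v u}}
  Adj A B :=
    (∀ i j : Fin (r+1), (j : ℕ) = (i : ℕ) + 1 → A.1 i ⊆ B.1 j ∧ B.1 i ⊆ A.1 j) ∧
    ∀ j : Fin (r+1), ∀ a ∈ A.1 j, ∀ b ∈ B.1 j, H.Adj a b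
  symm := by
    rintro A B ⟨h1, h2⟩
    exact ⟨fun i j hij => ⟨(h1 i j hij).2, (h1 i j hij).1⟩,
           fun j b hb a ha => H.symm _ _ (h2 j a ha b hb)⟩

/-- The circular complete graph `K_{n/d}`. -/
def circGraph (n d : ℕ) : PGraph where
  V := Fin n
  Adj u v := (d : ℤ) ≤ |(u : ℤ) - (v : ℤ)| ∧ |(u : ℤ) - (v : ℤ)| ≤ (n : ℤ) - d
  symm := by
    intro u v h
    rwa [abs_sub_comm]

/-- The circular chromatic number, as a real number. -/
noncomputable def circChrom (G : PGraph) : ℝ :=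
  sInf {x : ℝ | ∃ n d : ℕ, 0 < d ∧ 2 * d ≤ n ∧ Nat.gcd n d = 1 ∧
    x = (n : ℝ) / (d : ℝ) ∧ G.homTo (circGraph n d)}

/-- The cycle on `m` vertices. -/
def cycleGraph (m : ℕ) : PGraph :=
  ⟨ZMod m, fun i j => i = j + 1 ∨ j = i + 1, fun _ _ h => h.symm⟩

/-- Graph isomorphism. -/
def Isom (G H : PGraph) : Prop :=
  ∃ f : G.V ≃ H.V, ∀ u v, G.Adj u v ↔ H.Adj (f u) (f v)

/-- The helical graph `H(m,n,k)`. -/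
def helical (m n k : ℕ) : PGraph where
  V := {A : Fin k → Set (Fin m) //
        (∀ h : 0 < k, (A ⟨0, h⟩).ncard = n) ∧
        (∀ i, n ≤ (A i).ncard) ∧
        (∀ i : Fin k, ∀ h : (i : ℕ) + 1 < k, A i ∩ A ⟨(i : ℕ) + 1, h⟩ = ∅) ∧
        (∀ i : Fin k, ∀ h : (i : ℕ) + 2 < k, A i ⊆ A ⟨(i : ℕ) + 2, h⟩)}
  Adj A B :=
    (∀ i, A.1 i ∩ B.1 i = ∅) ∧
    (∀ i : Fin k, ∀ h : (i : ℕ) + 1 < k,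
      A.1 i ⊆ B.1 ⟨(i : ℕ) + 1, h⟩ ∧ B.1 i ⊆ A.1 ⟨(i : ℕ) + 1, h⟩)
  symm := by
    rintro A B ⟨h1, h2⟩
    refine ⟨fun i => ?_, fun i h => ⟨(h2 i h).2, (h2 i h).1⟩⟩
    rw [Set.inter_comm]
    exact h1 i

/-- A graph with chromatic number `k` is colorful if every proper `k`-coloring
admits a (nonempty) induced subgraph all of whose vertices see all `k` colors in
their closed neighborhood. -/
def Colorful (G : PGraph) : Prop :=
  ∀ c : G.V → Fin G.chromatic, (∀ u v, G.Adj u v → c u ≠ c v) →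
    ∃ S : Set G.V, S.Nonempty ∧
      ∀ v ∈ S, ∀ col : Fin G.chromatic,
        ∃ u ∈ S, (u = v ∨ G.Adj v u) ∧ c u = col

end PGraph

open PGraph

/-!
Everything goes through homomorphisms into odd cycles `C_M` (vertex set `ZMod M`).

Halving the vertices of `C_M` maps `C_M^{2s+1}` to the circular clique `K_{M/D}` with
`M = 2D + 2s + 1`; since `G → S_{2s+1}(G)^{2s+1}`, a homomorphism `S_{2s+1}(G) → C_M` gives
`G → K_{M/D}`. Conversely, doubling a circular colouring `G → K_{M/D}` and joining the images
of adjacent vertices by walks of length `2s+1` gives `S_{2s+1}(G) → C_M`.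

A 3-colouring `c` of `H^{2r+1}` yields `H → C_{6r+3}`. The colours at walk-distance exactly
`i ≤ r` from a vertex `v` grow with step `2` and differ between even and odd `i`, so each colour
enters at a single threshold level; the resulting pattern is the one seen from some position
`(2r+1) c(v) + x` of `C_{6r+3}` coloured in three blocks, and adjacent vertices get adjacent
positions.

So if `s < r` and `G^{(2r+1)/(2s+1)}` (loopless by the odd girth condition) is 3-colourable,
then `χ_c(G) ≤ (6r+3)/(3r+1-s) < 3`. If `χ_c(G) = n/d < 3`, then `n > 2d` since `G` is not
bipartite, `G → K_{(6n+9)/(2n+4)}`, and `S_{2n+1}(G)^{2n+3} → C_{6n+9}^{2n+3} → K_3`, so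
`θ(G) ≥ (2n+3)/(2n+1) > 1`.
-/

theorem exists_parity_threshold {P : ℕ → Prop} {r : ℕ} (hstep : ∀ i, i + 2 ≤ r → P i → P (i + 2))
    (hpar : ∀ i j, i ≤ r → j ≤ r → (i + j) % 2 = 1 → P i → ¬ P j) :
    ∃ t, ∀ i ≤ r, (P i ↔ t ≤ i ∧ i % 2 = t % 2) := by
  classical
  by_cases hP : ∃ i, i ≤ r ∧ P i
  · obtain ⟨htr, ht⟩ := Nat.find_spec hP
    have hup : ∀ m, Nat.find hP + 2 * m ≤ r → P (Nat.find hP + 2 * m) := by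
      intro m
      induction m with
      | zero => exact fun _ => ht
      | succ m ih => exact fun hm => hstep _ (by omega) (ih (by omega))
    refine ⟨Nat.find hP, fun i hi => ⟨fun h => ⟨Nat.find_min' hP ⟨hi, h⟩, ?_⟩, fun h => ?_⟩⟩
    · by_contra hne
      exact hpar _ i htr hi (by omega) ht h
    · obtain ⟨m, rfl⟩ : ∃ m, i = Nat.find hP + 2 * m := ⟨(i - Nat.find hP) / 2, by omega⟩
      exact hup m hi
  · exact ⟨r + 1, fun i hi => ⟨fun h => (hP ⟨i, hi, h⟩).elim, fun h => by omega⟩⟩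

theorem mul_div_sub_mul_div_mem_Icc {n d M D a b : ℕ} (hn : 0 < n) (h : n * D ≤ M * d)
    (hba : b + d ≤ a) (hab : a + d ≤ b + n) :
    ((a * M / n : ℕ) - (b * M / n : ℕ) : ℤ) ∈ Set.Icc (D : ℤ) (M - D) := by
  have ha := Nat.div_add_mod (a * M) n
  have ha' := Nat.mod_lt (a * M) hn
  have hb := Nat.div_add_mod (b * M) n
  have hb' := Nat.mod_lt (b * M) hn
  set A := a * M / n
  set B := b * M / n
  set ra := a * M % n
  set rb := b * M % n
  zify at *
  have hM : (0 : ℤ) ≤ M := by positivity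
  have hlow : (n : ℤ) * (D - 1) < n * (A - B) := by
    nlinarith [mul_le_mul_of_nonneg_right hba hM, (Nat.cast_nonneg rb : (0 : ℤ) ≤ rb)]
  have hupp : (n : ℤ) * (A - B) < n * (M - D + 1) := by
    nlinarith [mul_le_mul_of_nonneg_right hab hM, (Nat.cast_nonneg ra : (0 : ℤ) ≤ ra)]
  constructor <;> nlinarith

namespace PGraph

variable {G H K : PGraph}

section Walks

theorem walkLen_add {a b : ℕ} {x y z : G.V} (hxy : G.walkLen a x y) (hyz : G.walkLen b y z) :
    G.walkLen (a + b) x z := by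
  induction a generalizing x with
  | zero => cases hxy; simpa using hyz
  | succ a ih =>
    obtain ⟨w, hxw, hwy⟩ := hxy
    rw [Nat.add_right_comm]
    exact ⟨w, hxw, ih hwy⟩

theorem walkLen_add_two_mul {n : ℕ} {u v w : G.V} (hvw : G.Adj v w) (h : G.walkLen n u v)
    (e : ℕ) : G.walkLen (n + 2 * e) u v := by
  induction e with
  | zero => exact h
  | succ e ih =>
    rw [Nat.mul_succ, ← Nat.add_assoc]
    exact G.walkLen_concat _ _ _ _ (G.walkLen_concat _ _ _ _ ih hvw) (G.symm _ _ hvw)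

theorem exists_walkLen_to {v w : G.V} (hvw : G.Adj v w) (i : ℕ) : ∃ y, G.walkLen i y v := by
  rcases Nat.even_or_odd' i with ⟨e, rfl | rfl⟩
  · exact ⟨v, by simpa using walkLen_add_two_mul (n := 0) hvw rfl e⟩
  · exact ⟨w, by simpa [Nat.add_comm] using
      walkLen_add_two_mul (n := 1) hvw ⟨v, G.symm _ _ hvw, rfl⟩ e⟩

theorem walkLen_map {f : G.V → H.V} (hf : ∀ u v, G.Adj u v → H.Adj (f u) (f v)) {n : ℕ}
    {x y : G.V} (h : G.walkLen n x y) : H.walkLen n (f x) (f y) := by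
  induction n generalizing x with
  | zero => exact congrArg f h
  | succ n ih =>
    obtain ⟨w, hxw, hwy⟩ := h
    exact ⟨f w, hf _ _ hxw, ih hwy⟩

end Walks

section Homomorphisms

theorem homTo.trans (hGH : G.homTo H) (hHK : H.homTo K) : G.homTo K := by
  obtain ⟨f, hf⟩ := hGH
  obtain ⟨g, hg⟩ := hHK
  exact ⟨g ∘ f, fun u v huv => hg _ _ (hf u v huv)⟩

theorem homTo.pow (h : G.homTo H) (n : ℕ) : (G.pow n).homTo (H.pow n) := by
  obtain ⟨f, hf⟩ := h
  exact ⟨f, fun _ _ => walkLen_map hf⟩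

theorem completeGraph_homTo_completeGraph {a b : ℕ} (h : a ≤ b) :
    (completeGraph a).homTo (completeGraph b) :=
  ⟨Fin.castLE h, fun _ _ huv e => huv (Fin.castLE_injective h e)⟩

theorem not_adj_self_of_homTo_completeGraph {k : ℕ} (h : G.homTo (completeGraph k)) (v : G.V) :
    ¬ G.Adj v v := by
  obtain ⟨_, hf⟩ := h
  exact fun hv => hf v v hv rfl

theorem chromatic_le {k : ℕ} (h : G.homTo (completeGraph k)) : G.chromatic ≤ k :=
  Nat.sInf_le h

theorem homTo_completeGraph_of_chromatic_le {k m : ℕ} (hk : G.homTo (completeGraph k))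
    (h : G.chromatic ≤ m) : G.homTo (completeGraph m) :=
  homTo.trans (Nat.sInf_mem (s := {m | G.homTo (completeGraph m)}) ⟨k, hk⟩)
    (completeGraph_homTo_completeGraph h)

theorem homTo_completeGraph_of_chromatic_eq {k : ℕ} (h : G.chromatic = k) (hk : k ≠ 0) :
    G.homTo (completeGraph k) :=
  h ▸ Nat.sInf_mem (Nat.nonempty_of_pos_sInf (Nat.pos_of_ne_zero (h ▸ hk)))

theorem exists_homTo_completeGraph [Finite G.V] (hG : ∀ v, ¬ G.Adj v v) :
    ∃ k, G.homTo (completeGraph k) := by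
  obtain ⟨k, ⟨e⟩⟩ := Finite.exists_equiv_fin G.V
  exact ⟨k, e, fun u v huv h => hG u (e.injective h ▸ huv)⟩

theorem chromatic_eq_of_homTo (hGH : G.homTo H) (hHG : H.homTo G) :
    G.chromatic = H.chromatic :=
  congrArg sInf (Set.ext fun _ => ⟨hHG.trans, hGH.trans⟩)

end Homomorphisms

section Circular

theorem circGraph_adj_of_modEq {M D : ℕ} {x y : Fin M} {k : ℤ} (hk : D ≤ k) (hk' : k ≤ M - D)
    (h : (y : ℤ) ≡ x + k [ZMOD M]) : (circGraph M D).Adj x y := by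
  obtain ⟨t, ht⟩ := h.dvd
  have hx := x.isLt
  have hy := y.isLt
  have ht0 : 0 ≤ t := by nlinarith
  have ht1 : t ≤ 1 := by nlinarith
  show (D : ℤ) ≤ |(x : ℤ) - y| ∧ |(x : ℤ) - y| ≤ M - D
  interval_cases t <;> rcases abs_cases ((x : ℤ) - y) with ⟨habs, _⟩ | ⟨habs, _⟩ <;> omega

theorem circGraph_homTo_circGraph {n d M D : ℕ} (hM : 0 < M) (h : n * D ≤ M * d) :
    (circGraph n d).homTo (circGraph M D) := by
  refine ⟨fun (a : Fin n) =>
      ⟨a * M / n, Nat.div_lt_of_lt_mul (Nat.mul_lt_mul_of_pos_right a.isLt hM)⟩,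
    fun (a b : Fin n) ⟨hd, hnd⟩ => ?_⟩
  have hn : 0 < n := Fin.pos a
  show (D : ℤ) ≤ |((a * M / n : ℕ) : ℤ) - (b * M / n : ℕ)| ∧
    |((a * M / n : ℕ) : ℤ) - (b * M / n : ℕ)| ≤ M - D
  rcases le_total (b : ℕ) a with hba | hab
  · rw [abs_of_nonneg (by omega)] at hd hnd
    obtain ⟨h₁, h₂⟩ := mul_div_sub_mul_div_mem_Icc hn h (a := a) (b := b) (by omega) (by omega)
    rw [abs_of_nonneg (by omega)]
    exact ⟨h₁, h₂⟩
  · rw [abs_of_nonpos (by omega)] at hd hnd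
    obtain ⟨h₁, h₂⟩ := mul_div_sub_mul_div_mem_Icc hn h (a := b) (b := a) (by omega) (by omega)
    rw [abs_of_nonpos (by omega)]
    constructor <;> linarith

theorem completeGraph_three_homTo_circGraph : (completeGraph 3).homTo (circGraph 3 1) :=
  ⟨id, show ∀ u v : Fin 3, u ≠ v → (1 : ℤ) ≤ |(u : ℤ) - v| ∧ |(u : ℤ) - v| ≤ 3 - 1 by decide⟩

theorem circGraph_three_homTo_completeGraph : (circGraph 3 1).homTo (completeGraph 3) :=
  ⟨id, fun (u _ : Fin 3) ⟨h₁, _⟩ e => by subst e; simp [id] at h₁⟩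

theorem walkLen_circGraph_two {n : ℕ} {a b : Fin 2} (h : (circGraph 2 1).walkLen n a b) :
    (a + n) % 2 = (b : ℕ) % 2 := by
  induction n generalizing a with
  | zero => cases h; simp
  | succ n ih =>
    obtain ⟨(w : Fin 2), ⟨h₁, -⟩, hw⟩ := h
    have := ih hw
    have := a.isLt
    have := w.isLt
    rcases abs_cases ((a : ℤ) - w) with ⟨habs, -⟩ | ⟨habs, -⟩ <;> simp only [habs] at h₁ <;> omega

theorem not_homTo_circGraph_two (hG : G.Nonbipartite) : ¬ G.homTo (circGraph 2 1) := by
  rintro ⟨f, hf⟩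
  obtain ⟨n, v, ⟨k, rfl⟩, hv⟩ := hG
  have := walkLen_circGraph_two (walkLen_map hf hv)
  omega

theorem circChrom_le {n d : ℕ} (hd : 0 < d) (hnd : 2 * d ≤ n) (h : G.homTo (circGraph n d)) :
    G.circChrom ≤ n / d := by
  obtain ⟨g, n', d', hg, hcop, rfl, rfl⟩ := Nat.exists_coprime' (Nat.gcd_pos_of_pos_right n hd)
  have hd' : 0 < d' := Nat.pos_of_mul_pos_right hd
  have hnd' : 2 * d' ≤ n' := Nat.le_of_mul_le_mul_right (by linarith) hg
  refine csInf_le ⟨0, ?_⟩ ⟨n', d', hd', hnd', hcop, ?_,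
    h.trans (circGraph_homTo_circGraph (by omega) (by rw [Nat.mul_right_comm, Nat.mul_assoc]))⟩
  · rintro _ ⟨n, d, -, -, -, rfl, -⟩
    positivity
  · push_cast
    rw [mul_div_mul_right _ _ (by positivity)]

theorem circChrom_le_three (h3 : G.chromatic = 3) : G.circChrom ≤ 3 := by
  simpa using circChrom_le (n := 3) (d := 1) one_pos (by norm_num)
    ((homTo_completeGraph_of_chromatic_eq h3 three_ne_zero).trans
      completeGraph_three_homTo_circGraph)

end Circular

section Cycles

theorem exists_eq_add_of_walkLen_cycleGraph {M n : ℕ} {a b : ZMod M}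
    (h : (cycleGraph M).walkLen n a b) :
    ∃ j : ℤ, -(n : ℤ) ≤ j ∧ j ≤ n ∧ (j + n) % 2 = 0 ∧ b = a + j := by
  induction n generalizing a with
  | zero => cases h; exact ⟨0, by simp⟩
  | succ n ih =>
    obtain ⟨(w : ZMod M), haw | hwa, hw⟩ := h
    all_goals obtain ⟨j, hj₁, hj₂, hj, rfl⟩ := ih hw
    · exact ⟨j - 1, by omega, by omega, by omega, by rw [haw]; push_cast; ring⟩
    · exact ⟨j + 1, by omega, by omega, by omega, by rw [hwa]; push_cast; ring⟩

theorem homTo_cycleGraph_of_modEq {M : ℕ} (θ : G.V → ℤ)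
    (h : ∀ u v, G.Adj u v → θ v ≡ θ u + 1 [ZMOD M] ∨ θ u ≡ θ v + 1 [ZMOD M]) :
    G.homTo (cycleGraph M) := by
  refine ⟨fun v => (θ v : ZMod M), fun u v huv => ?_⟩
  rcases h u v huv with h' | h'
  · exact Or.inr (by simpa using (ZMod.intCast_eq_intCast_iff _ _ _).2 h')
  · exact Or.inl (by simpa using (ZMod.intCast_eq_intCast_iff _ _ _).2 h')

/-- Multiplication by `m + 1 = 2⁻¹` halves the vertices of `C_M`: an odd step `j` becomes
a step `(j + M) / 2`. -/
theorem cycleGraph_pow_homTo_circGraph {M n : ℕ} (hM : Odd M) (hn : Odd n) (hnM : n < M) :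
    ((cycleGraph M).pow n).homTo (circGraph M ((M - n) / 2)) := by
  have : NeZero M := ⟨by rintro rfl; simp at hM⟩
  obtain ⟨m, hm⟩ := hM
  refine ⟨fun (a : ZMod M) => ⟨(a * (m + 1 : ℕ)).val, ZMod.val_lt _⟩,
    fun (a b : ZMod M) hab => ?_⟩
  obtain ⟨j, hj₁, hj₂, hj, rfl⟩ := exists_eq_add_of_walkLen_cycleGraph hab
  obtain ⟨k, hk⟩ : ∃ k : ℤ, j + M = 2 * k := ⟨(j + M) / 2, by obtain ⟨t, rfl⟩ := hn; omega⟩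
  refine circGraph_adj_of_modEq (k := k) (by omega) (by omega) ?_
  rw [← ZMod.intCast_eq_intCast_iff]
  have hk' : (j : ZMod M) + (M : ℤ) = 2 * k := by
    exact_mod_cast congrArg (Int.cast : ℤ → ZMod M) hk
  have hm' : ((M : ℤ) : ZMod M) = 2 * m + 1 := by
    exact_mod_cast congrArg (Nat.cast : ℕ → ZMod M) hm
  have hM0 : ((M : ℤ) : ZMod M) = 0 := by simp
  push_cast [ZMod.natCast_val, ZMod.cast_id', id]
  linear_combination (1 + m : ZMod M) * hk' - (k : ZMod M) * hm' + (k - m - 1 : ZMod M) * hM0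

end Cycles

section Subdivisions

variable {s : ℕ}

theorem walkLen_subdiv_inl_inr {u v : G.V} (h : G.Adj u v) {k : ℕ} (hk : k < s) :
    (G.subdiv s).walkLen (2 * k + 2) (Sum.inl u) (Sum.inr (⟨(u, v), h⟩, ⟨k, hk⟩)) := by
  induction k with
  | zero =>
    exact ⟨Sum.inr (⟨(v, u), G.symm _ _ h⟩, ⟨s - 1, by omega⟩), ⟨rfl, rfl⟩,
      Sum.inr (⟨(u, v), h⟩, ⟨0, hk⟩), ⟨rfl, rfl, Or.inr (by dsimp only; omega)⟩, rfl⟩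
  | succ k ih =>
    have hback : (G.subdiv s).Adj (Sum.inr (⟨(u, v), h⟩, ⟨k, by omega⟩))
        (Sum.inr (⟨(v, u), G.symm _ _ h⟩, ⟨s - 2 - k, by omega⟩)) :=
      ⟨rfl, rfl, Or.inl (by dsimp only; omega)⟩
    have hforth : (G.subdiv s).Adj (Sum.inr (⟨(v, u), G.symm _ _ h⟩, ⟨s - 2 - k, by omega⟩))
        (Sum.inr (⟨(u, v), h⟩, ⟨k + 1, hk⟩)) :=
      ⟨rfl, rfl, Or.inr (by dsimp only; omega)⟩
    exact walkLen_concat _ _ _ _ _ (walkLen_concat _ _ _ _ _ (ih (by omega)) hback) hforth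

theorem walkLen_subdiv_inl_inl {u v : G.V} (h : G.Adj u v) :
    (G.subdiv s).walkLen (2 * s + 1) (Sum.inl u) (Sum.inl v) := by
  rcases Nat.eq_zero_or_pos s with rfl | hs
  · exact ⟨Sum.inl v, ⟨rfl, h⟩, rfl⟩
  · have hlast : (G.subdiv s).Adj (Sum.inr (⟨(u, v), h⟩, ⟨s - 1, by omega⟩)) (Sum.inl v) :=
      ⟨rfl, rfl⟩
    have := walkLen_concat _ _ _ _ _ (walkLen_subdiv_inl_inr h (k := s - 1) (by omega)) hlast
    rwa [show 2 * (s - 1) + 2 + 1 = 2 * s + 1 by omega] at this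

theorem homTo_subdiv_pow (s : ℕ) : G.homTo ((G.subdiv s).pow (2 * s + 1)) :=
  ⟨Sum.inl, fun _ _ => walkLen_subdiv_inl_inl⟩

theorem subdiv_zero_pow_one_homTo : ((G.subdiv 0).pow 1).homTo G := by
  refine ⟨Sum.elim id fun p => p.2.elim0, ?_⟩
  rintro (u | ⟨-, k⟩) y ⟨w, hxw, rfl⟩
  · rcases w with v | ⟨-, l⟩
    · exact hxw.2
    · exact l.elim0
  · exact k.elim0

theorem chromatic_subdiv_zero_pow_one : ((G.subdiv 0).pow 1).chromatic = G.chromatic :=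
  chromatic_eq_of_homTo subdiv_zero_pow_one_homTo (homTo_subdiv_pow 0)

theorem subdiv_homTo_of_paths (s : ℕ) (f : G.V → H.V) (P : G.V → G.V → ℕ → H.V)
    (hlast : ∀ u v, G.Adj u v → P u v (2 * s + 1) = f v)
    (hstep : ∀ u v, G.Adj u v → ∀ p < 2 * s + 1, H.Adj (P u v p) (P u v (p + 1)))
    (hsymm : ∀ u v, G.Adj u v → ∀ p ≤ 2 * s + 1, P v u p = P u v (2 * s + 1 - p)) :
    (G.subdiv s).homTo H := by
  refine ⟨Sum.elim f fun x => P x.1.1.1 x.1.1.2 (2 * x.2 + 2), ?_⟩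
  rintro (u | ⟨⟨⟨a, b⟩, hab⟩, k⟩) (v | ⟨⟨⟨a', b'⟩, hab'⟩, l⟩) hxy
  · obtain ⟨rfl, huv⟩ := hxy
    have h0 : P u v 0 = f u := by
      rw [hsymm v u (G.symm _ _ huv) 0 (by omega), hlast v u (G.symm _ _ huv)]
    simpa [h0, hlast u v huv] using hstep u v huv 0 (by omega)
  · obtain ⟨rfl, hl⟩ := hxy
    have := hstep a' u hab' (2 * s) (by omega)
    simp only [Sum.elim_inl, Sum.elim_inr, hl]
    rw [show 2 * (s - 1) + 2 = 2 * s by have := l.isLt; omega]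
    rw [hlast a' u hab'] at this
    exact H.symm _ _ this
  · obtain ⟨rfl, hk⟩ := hxy
    have := hstep a v hab (2 * s) (by omega)
    simp only [Sum.elim_inl, Sum.elim_inr, hk]
    rw [show 2 * (s - 1) + 2 = 2 * s by have := k.isLt; omega]
    rwa [hlast a v hab] at this
  · obtain ⟨h₁ : a' = b, h₂ : b' = a, hkl⟩ := hxy
    subst a' b'
    have hk := k.isLt
    have hl := l.isLt
    simp only [Sum.elim_inr]
    rw [hsymm a b hab _ (by omega)]
    rcases hkl with hkl | hkl
    · rw [show 2 * s + 1 - (2 * l + 2) = 2 * k + 2 + 1 by omega]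
      exact hstep a b hab _ (by omega)
    · rw [show 2 * s + 1 - (2 * l + 2) = 2 * k + 1 by omega]
      exact H.symm _ _ (hstep a b hab _ (by omega))

/-- Straight up to `(J+1)/2`, oscillating, then straight up to `J` at time `L`: a `±1`-walk
whose two halves are symmetric. -/
def zigzagNonneg (L J p : ℤ) : ℤ :=
  if p ≤ (J + 1) / 2 then p
  else if p ≤ L - (J - 1) / 2 then (J + 1) / 2 - (p - (J + 1) / 2) % 2
  else J - (L - p)

def zigzag (L J p : ℤ) : ℤ :=
  if 0 ≤ J then zigzagNonneg L J p else -zigzagNonneg L (-J) p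

section zigzag

variable {L J : ℤ} (hL : L % 2 = 1) (hJ : J % 2 = 1) (hJL : -L ≤ J ∧ J ≤ L)
include hL hJ hJL

theorem zigzag_last : zigzag L J L = J := by
  unfold zigzag zigzagNonneg; split_ifs <;> omega

theorem zigzag_step (p : ℤ) :
    zigzag L J (p + 1) = zigzag L J p + 1 ∨ zigzag L J p = zigzag L J (p + 1) + 1 := by
  unfold zigzag zigzagNonneg; split_ifs <;> omega

theorem zigzag_sub (p : ℤ) : zigzag L J (L - p) = J - zigzag L J p := by
  unfold zigzag zigzagNonneg; split_ifs <;> omega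

end zigzag

theorem zigzag_neg {L J p : ℤ} (hJ : J ≠ 0) : zigzag L (-J) p = -zigzag L J p := by
  unfold zigzag; split_ifs <;> first | omega | simp

theorem subdiv_homTo_cycleGraph {M D : ℕ} (hM : M = 2 * D + (2 * s + 1)) (hD : 0 < D)
    (h : G.homTo (circGraph M D)) : (G.subdiv s).homTo (cycleGraph M) := by
  obtain ⟨(f : G.V → Fin M), hf⟩ := h
  -- the odd step from `2 f u` to `2 f v` in `C_M`, of absolute value at most `2s+1`
  let J : G.V → G.V → ℤ := fun u v =>
    2 * ((f v : ℕ) - (f u : ℕ) : ℤ) - if (f u : ℕ) < f v then (M : ℤ) else -M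
  have hJ : ∀ u v, G.Adj u v → (2 * s + 1 : ℤ) % 2 = 1 ∧ J u v % 2 = 1 ∧
      (-(2 * s + 1 : ℤ) ≤ J u v ∧ J u v ≤ 2 * s + 1) ∧ J v u = -J u v ∧
      ∃ t : ℤ, 2 * (f v : ℕ) - (2 * (f u : ℕ) + J u v) = M * t := by
    intro u v huv
    obtain ⟨h₁, h₂⟩ := hf u v huv
    refine ⟨by omega, ?_, ?_, ?_, if (f u : ℕ) < f v then 1 else -1,
      by simp only [J]; split_ifs <;> ring⟩
    all_goals
      simp only [J]
      rcases abs_cases ((f u : ℕ) - (f v : ℕ) : ℤ) with ⟨habs, -⟩ | ⟨habs, -⟩ <;>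
        rw [habs] at h₁ h₂ <;> split_ifs <;> omega
  refine subdiv_homTo_of_paths s (fun u => ((2 * (f u : ℕ) : ℤ) : ZMod M))
    (fun u v p => ((2 * (f u : ℕ) + zigzag (2 * s + 1) (J u v) p : ℤ) : ZMod M)) ?_ ?_ ?_
  · intro u v huv
    obtain ⟨hL, hJo, hJL, -, t, ht⟩ := hJ u v huv
    refine (ZMod.intCast_eq_intCast_iff_dvd_sub _ _ _).2 ⟨t, ?_⟩
    push_cast
    rw [zigzag_last hL hJo hJL]
    linarith
  · intro u v huv p _
    obtain ⟨hL, hJo, hJL, -⟩ := hJ u v huv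
    rcases zigzag_step hL hJo hJL p with h' | h'
    · exact Or.inr (by push_cast [h']; ring)
    · exact Or.inl (by push_cast [h']; ring)
  · intro u v huv p hp
    obtain ⟨hL, hJo, hJL, hneg, t, ht⟩ := hJ u v huv
    refine (ZMod.intCast_eq_intCast_iff_dvd_sub _ _ _).2 ⟨-t, ?_⟩
    push_cast [hp]
    rw [zigzag_sub hL hJo hJL, hneg, zigzag_neg (by omega)]
    linarith

theorem homTo_circGraph_of_subdiv_homTo {M : ℕ} (hM : Odd M) (hsM : 2 * s + 1 < M)
    (h : (G.subdiv s).homTo (cycleGraph M)) : G.homTo (circGraph M ((M - (2 * s + 1)) / 2)) :=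
  (homTo_subdiv_pow s).trans
    ((h.pow _).trans (cycleGraph_pow_homTo_circGraph hM (odd_two_mul_add_one s) hsM))

end Subdivisions

section OddGirth

variable {s : ℕ}

/-- `a` is an end of the subdivided edge through `x`, at distance `p` from `x` along it. -/
def IsAnchor (G : PGraph) (s : ℕ) : (G.subdiv s).V → G.V → ℕ → Prop
  | Sum.inl u, a, p => a = u ∧ p = 0
  | Sum.inr (e, k), a, p => (a = e.1.1 ∧ p = 2 * k + 2) ∨ (a = e.1.2 ∧ p = 2 * s - 2 * k - 1)

theorem IsAnchor.exists_of_adj {x w : (G.subdiv s).V} (hxw : (G.subdiv s).Adj x w) {a : G.V}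
    {p : ℕ} (ha : IsAnchor G s x a p) :
    ∃ a' p' m, IsAnchor G s w a' p' ∧ G.walkLen m a a' ∧ (2 * s + 1) * m + p' ≤ p + 1 ∧
      ((2 * s + 1) * m + p') % 2 = (p + 1) % 2 := by
  rcases x with u | ⟨e, k⟩ <;> rcases w with v | ⟨e', l⟩
  · obtain ⟨rfl, rfl⟩ := ha
    obtain ⟨rfl, huv⟩ := hxw
    exact ⟨v, 0, 1, ⟨rfl, rfl⟩, ⟨v, huv, rfl⟩, by omega, by omega⟩
  · obtain ⟨rfl, rfl⟩ := ha
    obtain ⟨rfl, hl⟩ := hxw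
    exact ⟨_, _, 0, Or.inr ⟨rfl, rfl⟩, rfl, by omega, by omega⟩
  · obtain ⟨rfl, hk⟩ := hxw
    rcases ha with ⟨rfl, rfl⟩ | ⟨rfl, rfl⟩
    · exact ⟨_, 0, 1, ⟨rfl, rfl⟩, ⟨_, e.2, rfl⟩, by omega, by omega⟩
    · exact ⟨_, 0, 0, ⟨rfl, rfl⟩, rfl, by omega, by omega⟩
  · obtain ⟨h₁, h₂, hkl⟩ := hxw
    have := k.isLt
    rcases ha with ⟨rfl, rfl⟩ | ⟨rfl, rfl⟩
    · exact ⟨_, _, 0, Or.inr ⟨rfl, rfl⟩, h₂.symm, by omega, by omega⟩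
    · exact ⟨_, _, 0, Or.inl ⟨rfl, rfl⟩, h₁.symm, by omega, by omega⟩

theorem exists_walkLen_of_walkLen_subdiv_inl {L : ℕ} {x : (G.subdiv s).V} {b : G.V}
    (h : (G.subdiv s).walkLen L x (Sum.inl b)) {a : G.V} {p : ℕ} (ha : IsAnchor G s x a p) :
    ∃ n, G.walkLen n a b ∧ (2 * s + 1) * n ≤ L + p ∧ ((2 * s + 1) * n + p) % 2 = L % 2 := by
  induction L generalizing x a p with
  | zero =>
    subst h
    obtain ⟨rfl, rfl⟩ := ha
    exact ⟨0, rfl, by simp, by simp⟩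
  | succ L ih =>
    obtain ⟨w, hxw, hw⟩ := h
    obtain ⟨a', p', m, ha', hm, h₁, h₂⟩ := ha.exists_of_adj hxw
    obtain ⟨n, hn, h₃, h₄⟩ := ih hw ha'
    refine ⟨m + n, walkLen_add hm hn, ?_, ?_⟩ <;> rw [Nat.mul_add] <;> omega

theorem walkLen_subdiv_cases {L : ℕ} {x y : (G.subdiv s).V} (h : (G.subdiv s).walkLen L x y) :
    (∃ w L₁ L₂, L₁ + L₂ = L ∧ (G.subdiv s).walkLen L₁ x (Sum.inl w) ∧
      (G.subdiv s).walkLen L₂ (Sum.inl w) y) ∨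
    ∃ e k e' k', x = Sum.inr (e, k) ∧ y = Sum.inr (e', k') ∧
      ((e'.1 = e.1 ∧ L % 2 = 0) ∨ (e'.1 = e.1.swap ∧ L % 2 = 1)) := by
  induction L generalizing x with
  | zero =>
    subst h
    rcases x with u | ⟨e, k⟩
    · exact Or.inl ⟨u, 0, 0, rfl, rfl, rfl⟩
    · exact Or.inr ⟨e, k, e, k, rfl, rfl, Or.inl ⟨rfl, rfl⟩⟩
  | succ L ih =>
    obtain ⟨w, hxw, hw⟩ := h
    rcases x with u | ⟨e, k⟩
    · exact Or.inl ⟨u, 0, L + 1, by omega, rfl, w, hxw, hw⟩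
    rcases w with v | ⟨e₂, l⟩
    · exact Or.inl ⟨v, 1, L, by omega, ⟨_, hxw, rfl⟩, hw⟩
    have he₂ : e₂.1 = e.1.swap := Prod.ext hxw.1 hxw.2.1
    rcases ih hw with ⟨w', L₁, L₂, hL, h₁, h₂⟩ | ⟨e₃, k₃, e', k', he₃, rfl, he'⟩
    · exact Or.inl ⟨w', L₁ + 1, L₂, by omega, ⟨_, hxw, h₁⟩, h₂⟩
    · obtain ⟨rfl, rfl⟩ := Prod.ext_iff.1 (Sum.inr_injective he₃)
      refine Or.inr ⟨e, k, e', k', rfl, rfl, ?_⟩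
      rcases he' with ⟨he', hL⟩ | ⟨he', hL⟩
      · exact Or.inr ⟨he'.trans he₂, by omega⟩
      · exact Or.inl ⟨by rw [he', he₂, Prod.swap_swap], by omega⟩

theorem ltOddGirth_iff_lt {r : ℕ} :
    G.ltOddGirth ((2 * (r : ℚ) + 1) / (2 * (s : ℚ) + 1)) ↔
      ∀ n, Odd n → (∃ v, G.walkLen n v v) → 2 * r + 1 < (2 * s + 1) * n := by
  refine forall_congr' fun n => imp_congr_right fun _ => imp_congr_right fun _ => ?_
  rw [div_lt_iff₀ (by positivity), mul_comm]
  norm_cast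
  ring_nf

theorem ltOddGirth_of_loopless {r : ℕ} (hG : ∀ v, ¬ G.Adj v v)
    (h : 2 * r + 1 < 3 * (2 * s + 1)) : G.ltOddGirth ((2 * (r : ℚ) + 1) / (2 * (s : ℚ) + 1)) := by
  rw [ltOddGirth_iff_lt]
  rintro n ⟨k, rfl⟩ ⟨v, hv⟩
  rcases Nat.eq_zero_or_pos k with rfl | hk
  · exact (hG v (let ⟨_, hvw, hwv⟩ := hv; hwv ▸ hvw)).elim
  · nlinarith

theorem not_walkLen_subdiv_self {r : ℕ}
    (hog : G.ltOddGirth ((2 * (r : ℚ) + 1) / (2 * (s : ℚ) + 1))) (hsr : s ≤ r)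
    (x : (G.subdiv s).V) : ¬ (G.subdiv s).walkLen (2 * r + 1) x x := by
  intro h
  rw [ltOddGirth_iff_lt] at hog
  rcases walkLen_subdiv_cases h with ⟨w, L₁, L₂, hL, h₁, h₂⟩ | ⟨e, k, e', k', rfl, hy, he⟩
  · obtain ⟨n, hn, hle, hpar⟩ :=
      exists_walkLen_of_walkLen_subdiv_inl (walkLen_add h₂ h₁) (a := w) (p := 0) ⟨rfl, rfl⟩
    have hodd : Odd n := Nat.odd_iff.2 (by
      rw [show (2 * s + 1) * n = 2 * (s * n) + n by ring] at hpar
      omega)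
    have := hog n hodd ⟨w, hn⟩
    omega
  · obtain ⟨-, hL⟩ | ⟨he, -⟩ := he
    · omega
    obtain ⟨rfl, rfl⟩ := Prod.ext_iff.1 (Sum.inr_injective hy)
    have hloop : G.Adj e.1.1 e.1.1 := by
      have h₂₁ : e.1.2 = e.1.1 := by simpa using congrArg Prod.snd he
      simpa [h₂₁] using e.2
    have := hog 1 odd_one ⟨_, _, hloop, rfl⟩
    omega

end OddGirth

section ThreeColourings

/-- `cyclePattern r x k i`: the colour `γ + k` occurs at walk-distance exactly `i ≤ r` from
the vertex `2((2r+1)γ + x)` of `C_{6r+3}` (with `x ≤ 2r`), when the vertex `2y` of `C_{6r+3}`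
is coloured `⌊y / (2r+1)⌋`. -/
def cyclePattern (r x : ℕ) : Fin 3 → ℕ → Prop
  | 0, i => i % 2 = 0
  | 1, i => (i % 2 = 1 ∧ 2 * x + 1 ≤ 2 * r + i) ∨ (i % 2 = 0 ∧ 4 * r + 2 ≤ 2 * x + i)
  | 2, i => (i % 2 = 1 ∧ 2 * r + 1 ≤ 2 * x + i) ∨ (i % 2 = 0 ∧ 2 * x + 2 ≤ i)

theorem exists_cyclePattern_iff {r t₁ t₂ : ℕ} (h₁ : 1 ≤ t₁) (h₂ : 1 ≤ t₂) (h : t₁ = 1 ∨ t₂ = 1) :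
    ∃ x ≤ 2 * r, ∀ i ≤ r, (cyclePattern r x 1 i ↔ t₁ ≤ i ∧ i % 2 = t₁ % 2) ∧
      (cyclePattern r x 2 i ↔ t₂ ≤ i ∧ i % 2 = t₂ % 2) := by
  let pos (t : ℕ) : ℕ :=
    if r < t then r / 2 else if t % 2 = 0 then t / 2 - 1 else (2 * r + 1 - t) / 2
  rcases h with rfl | rfl
  · refine ⟨pos t₂, ?_, fun i hi => ?_⟩ <;> simp only [pos, cyclePattern] <;> split_ifs <;> omega
  · refine ⟨2 * r - pos t₁, ?_, fun i hi => ?_⟩ <;> simp only [pos, cyclePattern] <;>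
      split_ifs <;> omega

theorem add_le_and_le_of_cyclePattern {r x x' : ℕ} (hx' : x' ≤ 2 * r)
    (h₁ : cyclePattern r x 1 1) (h₂ : cyclePattern r x' 2 1)
    (hincl : ∀ i, i + 1 ≤ r → cyclePattern r x 2 i → cyclePattern r x' 1 (i + 1))
    (hincl' : ∀ i, i + 1 ≤ r → cyclePattern r x' 1 i → cyclePattern r x 2 (i + 1))
    (hdisj : ∀ i ≤ r, cyclePattern r x 2 i → ¬ cyclePattern r x' 1 i) :
    x + r ≤ x' ∧ x' ≤ x + r + 1 := by
  have := hincl (2 * x + 2)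
  have := hincl (2 * (r - x) + 1)
  have := hincl' (4 * r + 2 - 2 * x')
  have := hincl' (2 * (x' - r) + 1)
  have := hdisj (2 * x + 2)
  have := hdisj r
  simp only [cyclePattern] at *
  omega

theorem position_modEq {r a b xa xb : ℕ} (ha : a < 3) (hb : b = (a + 1) % 3)
    (h₁ : xa + r ≤ xb) (h₂ : xb ≤ xa + r + 1) :
    (2 * ((2 * r + 1) * b + xb) : ℤ) ≡ 2 * ((2 * r + 1) * a + xa) + 1 [ZMOD (6 * r + 3 : ℕ)] ∨
      (2 * ((2 * r + 1) * a + xa) : ℤ) ≡ 2 * ((2 * r + 1) * b + xb) + 1 [ZMOD (6 * r + 3 : ℕ)] := by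
  simp only [Int.modEq_iff_add_fac]
  have hb3 : b < 3 := hb ▸ Nat.mod_lt _ (by norm_num)
  rcases Nat.lt_or_ge xb (xa + r + 1) with hx | hx
  · refine Or.inr ⟨if a = 2 then -1 else 1, ?_⟩
    split_ifs <;> interval_cases a <;> interval_cases b <;> omega
  · refine Or.inl ⟨if a = 2 then 1 else -1, ?_⟩
    split_ifs <;> interval_cases a <;> interval_cases b <;> omega

section WalkColors

variable {r : ℕ} (c : H.V → Fin 3)

def walkColors (v : H.V) (i : ℕ) : Set (Fin 3) :=
  {δ | ∃ y, H.walkLen i y v ∧ c y = δ}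

variable {c}

theorem mem_walkColors_zero {v : H.V} {δ : Fin 3} : δ ∈ walkColors c v 0 ↔ δ = c v :=
  ⟨fun ⟨_, hy, hδ⟩ => hy ▸ hδ.symm, fun h => ⟨v, rfl, h.symm⟩⟩

theorem walkColors_nonempty {v w : H.V} (hvw : H.Adj v w) (i : ℕ) :
    (walkColors c v i).Nonempty :=
  let ⟨y, hy⟩ := exists_walkLen_to hvw i
  ⟨c y, y, hy, rfl⟩

theorem walkColors_subset_add_two {v w : H.V} (hvw : H.Adj v w) (i : ℕ) :
    walkColors c v i ⊆ walkColors c v (i + 2) :=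
  fun _ ⟨y, hy, hδ⟩ => ⟨y, walkLen_add_two_mul hvw hy 1, hδ⟩

theorem walkColors_subset_of_adj {u v : H.V} (huv : H.Adj u v) (i : ℕ) :
    walkColors c u i ⊆ walkColors c v (i + 1) :=
  fun _ ⟨y, hy, hδ⟩ => ⟨y, walkLen_concat _ _ _ _ _ hy huv, hδ⟩

variable (hc : ∀ x y, H.walkLen (2 * r + 1) x y → c x ≠ c y)
include hc

theorem ne_of_walkLen_of_walkLen {i j : ℕ} {v w y z : H.V} (hvw : H.Adj v w)
    (hy : H.walkLen i y v) (hz : H.walkLen j v z) (hij : i + j ≤ 2 * r + 1)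
    (hodd : (i + j) % 2 = 1) : c y ≠ c z := by
  obtain ⟨e, he⟩ : ∃ e, i + 2 * e + j = 2 * r + 1 := ⟨(2 * r + 1 - (i + j)) / 2, by omega⟩
  exact hc y z (he ▸ walkLen_add (walkLen_add_two_mul hvw hy e) hz)

theorem not_mem_walkColors_of_mem {i j : ℕ} {v w : H.V} {δ : Fin 3} (hvw : H.Adj v w)
    (hij : i + j ≤ 2 * r + 1) (hodd : (i + j) % 2 = 1) (hi : δ ∈ walkColors c v i) :
    δ ∉ walkColors c v j := by
  rintro ⟨z, hz, rfl⟩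
  obtain ⟨y, hy, hδ⟩ := hi
  exact ne_of_walkLen_of_walkLen hc hvw hy (walkLen_symm _ _ _ _ hz) hij hodd hδ

theorem not_mem_walkColors_of_adj {i j : ℕ} {u v : H.V} {δ : Fin 3} (huv : H.Adj u v)
    (hij : i + j ≤ 2 * r) (heven : (i + j) % 2 = 0) (hi : δ ∈ walkColors c u i) :
    δ ∉ walkColors c v j := by
  rintro ⟨z, hz, rfl⟩
  obtain ⟨y, hy, hδ⟩ := hi
  exact ne_of_walkLen_of_walkLen hc (H.symm _ _ huv) (walkLen_concat _ _ _ _ _ hy huv)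
    (walkLen_symm _ _ _ _ hz) (by omega) (by omega) hδ

theorem exists_walkColors_iff_cyclePattern (hr : 0 < r) {v w : H.V} (hvw : H.Adj v w) :
    ∃ x ≤ 2 * r, ∀ i ≤ r, ∀ k, (c v + k ∈ walkColors c v i ↔ cyclePattern r x k i) := by
  have hthr : ∀ k, ∃ t, ∀ i ≤ r, (c v + k ∈ walkColors c v i ↔ t ≤ i ∧ i % 2 = t % 2) :=
    fun k => exists_parity_threshold (fun i _ h => walkColors_subset_add_two hvw i h)
      (fun i j _ _ hij hi => not_mem_walkColors_of_mem hc hvw (by omega) hij hi)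
  choose t ht using hthr
  have ht0 : ∀ k, t k = 0 ↔ k = 0 := fun k => by
    have := ht k 0 (Nat.zero_le _)
    rw [mem_walkColors_zero, add_eq_left] at this
    omega
  have ht1 : t 1 = 1 ∨ t 2 = 1 := by
    obtain ⟨δ, hδ⟩ := walkColors_nonempty (c := c) hvw 1
    obtain ⟨k, rfl⟩ : ∃ k, δ = c v + k := ⟨δ - c v, by abel⟩
    have h := (ht k 1 hr).1 hδ
    obtain rfl | rfl | rfl := (by decide : ∀ k : Fin 3, k = 0 ∨ k = 1 ∨ k = 2) k
    · exact absurd ((ht0 0).2 rfl) (by omega)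
    · exact Or.inl (by omega)
    · exact Or.inr (by omega)
  obtain ⟨x, hx, hpat⟩ := exists_cyclePattern_iff (r := r)
    (Nat.one_le_iff_ne_zero.2 fun h => by simpa using (ht0 1).1 h)
    (Nat.one_le_iff_ne_zero.2 fun h => by simpa using (ht0 2).1 h) ht1
  refine ⟨x, hx, fun i hi k => ?_⟩
  rw [ht k i hi]
  obtain rfl | rfl | rfl := (by decide : ∀ k : Fin 3, k = 0 ∨ k = 1 ∨ k = 2) k
  · simp [cyclePattern, (ht0 0).2 rfl]
  · exact (hpat i hi).1.symm
  · exact (hpat i hi).2.symm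

theorem add_le_and_le_of_walkColors (hr : 0 < r) {u v : H.V} (huv : H.Adj u v)
    (hcv : c v = c u + 1) {xu xv : ℕ} (hxv : xv ≤ 2 * r)
    (hu : ∀ i ≤ r, ∀ k, (c u + k ∈ walkColors c u i ↔ cyclePattern r xu k i))
    (hv : ∀ i ≤ r, ∀ k, (c v + k ∈ walkColors c v i ↔ cyclePattern r xv k i)) :
    xu + r ≤ xv ∧ xv ≤ xu + r + 1 := by
  have e₁ : c u + 2 = c v + 1 := by rw [hcv, add_assoc]; rfl
  have e₂ : c v + 2 = c u := by rw [hcv, add_assoc]; exact add_eq_left.2 rfl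
  refine add_le_and_le_of_cyclePattern hxv ((hu 1 hr 1).1 ?_) ((hv 1 hr 2).1 ?_)
    (fun i hi h => ?_) (fun i hi h => ?_) (fun i hi h h' => ?_)
  · exact ⟨v, ⟨u, H.symm _ _ huv, rfl⟩, hcv⟩
  · exact ⟨u, ⟨v, huv, rfl⟩, e₂.symm⟩
  · exact (hv (i + 1) hi 1).1 (e₁ ▸ walkColors_subset_of_adj huv i ((hu i (by omega) 2).2 h))
  · exact (hu (i + 1) hi 2).1
      (e₁ ▸ walkColors_subset_of_adj (H.symm _ _ huv) i ((hv i (by omega) 1).2 h))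
  · exact not_mem_walkColors_of_adj hc huv (by omega) (by omega) ((hu i hi 2).2 h)
      (e₁ ▸ (hv i hi 1).2 h')

end WalkColors

theorem homTo_cycleGraph_of_pow_homTo {r : ℕ} (hr : 0 < r)
    (h : (H.pow (2 * r + 1)).homTo (completeGraph 3)) : H.homTo (cycleGraph (6 * r + 3)) := by
  obtain ⟨(c : H.V → Fin 3), hc⟩ := h
  have hpos : ∀ v, ∃ x ≤ 2 * r, ∀ w, H.Adj v w →
      ∀ i ≤ r, ∀ k, (c v + k ∈ walkColors c v i ↔ cyclePattern r x k i) := by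
    intro v
    by_cases hv : ∃ w, H.Adj v w
    · obtain ⟨w, hw⟩ := hv
      obtain ⟨x, hx, hpat⟩ := exists_walkColors_iff_cyclePattern hc hr hw
      exact ⟨x, hx, fun _ _ => hpat⟩
    · exact ⟨0, Nat.zero_le _, fun w hw => (hv ⟨w, hw⟩).elim⟩
  choose x hx hpat using hpos
  refine homTo_cycleGraph_of_modEq (fun v => 2 * ((2 * r + 1) * (c v : ℕ) + x v)) fun u v huv => ?_
  have hne : c u ≠ c v := hc u v (show H.walkLen (2 * r + 1) u v by
    simpa [Nat.add_comm] using walkLen_add_two_mul (n := 1) (H.symm _ _ huv) ⟨v, huv, rfl⟩ r)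
  obtain hcv | hcu : c v = c u + 1 ∨ c u = c v + 1 :=
    (by decide : ∀ a b : Fin 3, a ≠ b → b = a + 1 ∨ a = b + 1) _ _ hne
  · obtain ⟨h₁, h₂⟩ := add_le_and_le_of_walkColors hc hr huv hcv (hx v) (hpat u v huv)
      (hpat v u (H.symm _ _ huv))
    exact position_modEq (c u).isLt (by rw [hcv, Fin.val_add, Fin.val_one]) h₁ h₂
  · obtain ⟨h₁, h₂⟩ := add_le_and_le_of_walkColors hc hr (H.symm _ _ huv) hcu (hx u)
      (hpat v u (H.symm _ _ huv)) (hpat u v huv)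
    exact (position_modEq (c v).isLt (by rw [hcu, Fin.val_add, Fin.val_one]) h₁ h₂).symm

end ThreeColourings

section Thickness

theorem subdiv_pow_homTo_completeGraph_three {n d : ℕ} (h3d : n < 3 * d)
    (h : G.homTo (circGraph n d)) :
    ((G.subdiv n).pow (2 * (n + 1) + 1)).homTo (completeGraph 3) := by
  have hK : G.homTo (circGraph (6 * n + 9) (2 * n + 4)) :=
    h.trans (circGraph_homTo_circGraph (by omega) (by nlinarith))
  have hC := (subdiv_homTo_cycleGraph (s := n) (by omega) (by omega) hK).pow (2 * (n + 1) + 1)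
  refine (hC.trans (cycleGraph_pow_homTo_circGraph ⟨3 * n + 4, by ring⟩ ⟨n + 1, rfl⟩
    (by omega))).trans ((circGraph_homTo_circGraph (by omega) ?_).trans
      circGraph_three_homTo_completeGraph)
  omega

theorem circChrom_lt_three (hf : Finite G.V) {r s : ℕ} (hsr : s < r)
    (hog : G.ltOddGirth ((2 * (r : ℚ) + 1) / (2 * (s : ℚ) + 1)))
    (hχ : ((G.subdiv s).pow (2 * r + 1)).chromatic ≤ 3) : G.circChrom < 3 := by
  have : Finite ((G.subdiv s).pow (2 * r + 1)).V := by
    show Finite (G.V ⊕ _)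
    infer_instance
  obtain ⟨k, hk⟩ := exists_homTo_completeGraph (G := (G.subdiv s).pow (2 * r + 1))
    (not_walkLen_subdiv_self hog hsr.le)
  have hC := homTo_cycleGraph_of_pow_homTo (by omega) (homTo_completeGraph_of_chromatic_le hk hχ)
  have hK := homTo_circGraph_of_subdiv_homTo ⟨3 * r + 1, by ring⟩ (by omega) hC
  rw [show (6 * r + 3 - (2 * s + 1)) / 2 = 3 * r + 1 - s by omega] at hK
  calc G.circChrom ≤ ((6 * r + 3 : ℕ) : ℝ) / (3 * r + 1 - s : ℕ) :=
        circChrom_le (by omega) (by omega) hK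
    _ < 3 := by
      rw [div_lt_iff₀ (by norm_cast; omega), Nat.cast_sub (by omega)]
      push_cast
      linarith [(Nat.cast_lt.2 hsr : (s : ℝ) < r)]

theorem le_powerThickness (hG : G.Nonbipartite) {i : ℤ} {r s : ℕ}
    (hχ : (((G.subdiv s).pow (2 * r + 1)).chromatic : ℤ) ≤ G.chromatic + i)
    (hog : G.ltOddGirth ((2 * (r : ℚ) + 1) / (2 * (s : ℚ) + 1))) :
    (2 * (r : ℝ) + 1) / (2 * (s : ℝ) + 1) ≤ G.powerThickness i := by
  obtain ⟨n, v, hn, hv⟩ := hG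
  refine le_csSup ⟨n, ?_⟩ ⟨r, s, rfl, hχ, hog⟩
  rintro _ ⟨r', s', rfl, -, hog'⟩
  rw [div_le_iff₀ (by positivity)]
  have := (ltOddGirth_iff_lt.1 hog') n hn ⟨v, hv⟩
  exact_mod_cast (by nlinarith : 2 * r' + 1 ≤ n * (2 * s' + 1))

theorem one_le_powerThickness (hG : G.Nonbipartite) (hloop : ∀ v, ¬ G.Adj v v) :
    1 ≤ G.powerThickness 0 := by
  simpa using le_powerThickness hG (r := 0) (s := 0)
    (by exact_mod_cast (chromatic_subdiv_zero_pow_one (G := G)).le.trans (by simp))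
    (ltOddGirth_of_loopless hloop (by norm_num))

theorem powerThickness_le_one (hf : Finite G.V) (h3 : G.chromatic = 3)
    (hχ : 3 ≤ G.circChrom) : G.powerThickness 0 ≤ 1 := by
  have hG := not_adj_self_of_homTo_completeGraph
    (homTo_completeGraph_of_chromatic_eq h3 three_ne_zero)
  refine csSup_le ⟨1, 0, 0, by norm_num, ?_, ltOddGirth_of_loopless hG (by norm_num)⟩ ?_
  · exact_mod_cast (chromatic_subdiv_zero_pow_one (G := G)).le.trans (by simp)
  rintro _ ⟨r, s, rfl, hr, hog⟩
  rw [div_le_one (by positivity)]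
  by_contra! hlt
  have hsr : s < r := by exact_mod_cast (by linarith : (s : ℝ) < r)
  exact (circChrom_lt_three hf hsr hog (by omega)).not_ge hχ

theorem one_lt_powerThickness (hG : G.Nonbipartite) (h3 : G.chromatic = 3)
    (hχ : G.circChrom < 3) : 1 < G.powerThickness 0 := by
  have hK3 := homTo_completeGraph_of_chromatic_eq h3 three_ne_zero
  unfold circChrom at hχ
  obtain ⟨_, ⟨n, d, hd, h2d, hgcd, rfl, hhom⟩, hlt⟩ := exists_lt_of_csInf_lt
    (by exact ⟨3, 3, 1, one_pos, by norm_num, by norm_num, by norm_num,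
      hK3.trans completeGraph_three_homTo_circGraph⟩) hχ
  have h3d : n < 3 * d := by
    rw [div_lt_iff₀ (by positivity)] at hlt
    exact_mod_cast hlt
  have hn : 2 * d < n := by
    refine lt_of_le_of_ne h2d fun h => not_homTo_circGraph_two hG ?_
    obtain rfl : d = 1 := by rwa [← h, Nat.gcd_mul_left_left] at hgcd
    rwa [← h] at hhom
  calc (1 : ℝ) < (2 * ((n + 1 : ℕ) : ℝ) + 1) / (2 * (n : ℝ) + 1) := by
        rw [lt_div_iff₀ (by positivity)]
        push_cast
        linarith
    _ ≤ G.powerThickness 0 :=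
      le_powerThickness hG
        (by rw [h3]; exact_mod_cast chromatic_le (subdiv_pow_homTo_completeGraph_three h3d hhom))
        (ltOddGirth_of_loopless (not_adj_self_of_homTo_completeGraph hK3) (by omega))

end Thickness

end PGraph

/-- For a non-bipartite graph with `χ(G) = 3`,
`θ(G) = 1` iff `χ_c(G) = 3`. -/
theorem powerThickness_eq_one_iff_circChrom (G : PGraph) (hG : G.Nonbipartite)
    (hf : Finite G.V) (h3 : G.chromatic = 3) :
    (G.powerThickness 0 = 1 ↔ G.circChrom = 3) := by
  have hloop := not_adj_self_of_homTo_completeGraph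
    (homTo_completeGraph_of_chromatic_eq h3 three_ne_zero)
  refine ⟨fun hθ => (circChrom_le_three h3).antisymm (not_lt.1 fun hχ => ?_), fun hχ => ?_⟩
  · exact (one_lt_powerThickness hG h3 hχ).ne' hθ
  · exact (powerThickness_le_one hf h3 hχ.ge).antisymm (one_le_powerThickness hG hloop)
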